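/- A finite sum over RBs n and BSs j of functions p_n ↦ log₂(1 + γ_j(n)/(1 + p_n·F_j(n))) is a convex function of the power vector (p_1,…,p_N) on the nonnegative orthant. -/

import Mathlib

/-!
For `c ≥ 0` the map `x ↦ log (1 + c / x) = log (x + c) - log x` is convex on `x > 0`, since its
second derivative is `x⁻² - (x + c)⁻² ≥ 0`. Precomposing with the affine map `p ↦ 1 + p n * F`,
which sends the nonnegative orthant into `x > 0` when `F ≥ 0`, keeps each summand convex, and a
finite sum of convex functions is convex.
-/

open Real Set

theorem ConvexOn.finset_sum {E ι : Type*} [AddCommMonoid E] [Module ℝ E] {s : Set E}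
    (hs : Convex ℝ s) (t : Finset ι) {f : ι → E → ℝ} (hf : ∀ i ∈ t, ConvexOn ℝ s (f i)) :
    ConvexOn ℝ s (fun x => ∑ i ∈ t, f i x) := by
  induction t using Finset.cons_induction with
  | empty => simpa using convexOn_const (0 : ℝ) hs
  | cons a t _ ih =>
    simp only [Finset.sum_cons]
    exact (hf a (Finset.mem_cons_self a t)).add (ih fun i hi => hf i (Finset.mem_cons_of_mem hi))

theorem ConvexOn.comp_eval {ι E : Type*} [AddCommMonoid E] [Module ℝ E] {s : Set E}
    {f : E → ℝ} (hf : ConvexOn ℝ s f) (i : ι) :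
    ConvexOn ℝ {p : ι → E | p i ∈ s} (fun p => f (p i)) :=
  hf.comp_linearMap (LinearMap.proj (R := ℝ) (φ := fun _ : ι => E) i)

theorem convexOn_log_add_sub_log {c : ℝ} (hc : 0 ≤ c) :
    ConvexOn ℝ (Ioi 0) (fun x => log (x + c) - log x) := by
  have hd : ∀ x ∈ Ioi (0 : ℝ),
      HasDerivAt (fun x => log (x + c) - log x) ((x + c)⁻¹ - x⁻¹) x := fun x (hx : 0 < x) => by
    have h := (((hasDerivAt_id x).add_const c).log (by positivity)).sub (hasDerivAt_log hx.ne')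
    simp only [id, one_div] at h
    exact h
  have hd2 : ∀ x ∈ Ioi (0 : ℝ), HasDerivAt (fun x => (x + c)⁻¹ - x⁻¹)
      ((x ^ 2)⁻¹ - ((x + c) ^ 2)⁻¹) x := fun x (hx : 0 < x) => by
    have h := (((hasDerivAt_id x).add_const c).inv (by positivity)).sub (hasDerivAt_inv hx.ne')
    exact h.congr_deriv (by rw [id]; ring)
  refine convexOn_of_hasDerivWithinAt2_nonneg (convex_Ioi 0)
    (f' := fun x => (x + c)⁻¹ - x⁻¹) (f'' := fun x => (x ^ 2)⁻¹ - ((x + c) ^ 2)⁻¹)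
    (fun x hx => (hd x hx).continuousAt.continuousWithinAt) ?_ ?_ ?_ <;> rw [interior_Ioi]
  · exact fun x hx => (hd x hx).hasDerivWithinAt
  · exact fun x hx => (hd2 x hx).hasDerivWithinAt
  · intro x (hx : 0 < x)
    exact sub_nonneg.2 (inv_anti₀ (by positivity) (by nlinarith))

theorem convexOn_logb_one_add_div {b c : ℝ} (hb : 1 ≤ b) (hc : 0 ≤ c) :
    ConvexOn ℝ (Ioi 0) (fun x => logb b (1 + c / x)) := by
  refine ((convexOn_log_add_sub_log hc).smul (inv_nonneg.2 (log_nonneg hb))).congr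
    fun x (hx : 0 < x) => ?_
  dsimp only
  rw [smul_eq_mul, logb, div_eq_inv_mul, ← log_div (by positivity) hx.ne']
  congr 2
  field_simp

theorem convexOn_logb_one_add_div_one_add_mul {b c F : ℝ} (hb : 1 ≤ b) (hc : 0 ≤ c)
    (hF : 0 ≤ F) : ConvexOn ℝ (Ici 0) (fun t => logb b (1 + c / (1 + t * F))) := by
  let g : ℝ →ᵃ[ℝ] ℝ := AffineMap.const ℝ ℝ 1 + ((LinearMap.lsmul ℝ ℝ).flip F).toAffineMap
  refine (((convexOn_logb_one_add_div hb hc).comp_affineMap g).subset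
    (fun t (ht : 0 ≤ t) => show 0 < 1 + t * F by positivity) (convex_Ici 0)).congr
    fun _ _ => rfl

/-- The total interfered ground-UE sum-rate is convex in the power vector on the
nonnegative orthant. -/
theorem sum_interfered_rate_convexOn {ι : Type*} (N : ℕ) (Ω : Fin N → Finset ι)
    (γ F : Fin N → ι → ℝ)
    (hγ : ∀ n, ∀ j ∈ Ω n, 0 ≤ γ n j) (hF : ∀ n, ∀ j ∈ Ω n, 0 < F n j) :
    ConvexOn ℝ {p : Fin N → ℝ | ∀ n, 0 ≤ p n}
      (fun p => ∑ n : Fin N, ∑ j ∈ Ω n,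
        Real.logb 2 (1 + γ n j / (1 + p n * F n j))) := by
  have horthant : Convex ℝ {p : Fin N → ℝ | ∀ n, 0 ≤ p n} := convex_Ici 0
  refine ConvexOn.finset_sum horthant _ fun n _ => ConvexOn.finset_sum horthant _ fun j hj => ?_
  have hsummand := convexOn_logb_one_add_div_one_add_mul one_le_two (hγ n j hj) (hF n j hj).le
  exact (hsummand.comp_eval n).subset (fun _ hp => hp n) horthant
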